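/- There exists a constant C > 0, depending only on H, such that for all 0 < s ≤ t ≤ 1, 0 ≤ C(s,s) − C(s,t)²/C(t,t) ≤ C (t−s)^{2H}. -/

import Mathlib

open MeasureTheory intervalIntegral

/-- The covariance function of the Riemann–Liouville fractional Brownian motion:
`C(s,t) = ∫₀^(min s t) (t-r)^(H-1/2) (s-r)^(H-1/2) dr`. -/
noncomputable def rlCov (H s t : ℝ) : ℝ :=
  ∫ r in (0 : ℝ)..(min s t), (t - r) ^ (H - 1/2) * (s - r) ^ (H - 1/2)

/-- Integrability of `r ↦ (t - r) ^ q` on any interval, for `-1 < q`. -/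
lemma tsub_rpow_intervalIntegrable {q : ℝ} (hq : -1 < q) (t a b : ℝ) :
    IntervalIntegrable (fun r : ℝ => (t - r) ^ q) volume a b := by
  have h := (intervalIntegrable_rpow' (a := t - a) (b := t - b) hq).comp_sub_left t
  simpa using h

/-- The integral of `r ↦ (t - r) ^ q` over `a..b`, for `-1 < q`. -/
lemma integral_tsub_rpow {q : ℝ} (hq : -1 < q) (t a b : ℝ) :
    ∫ r in a..b, (t - r) ^ q = ((t - a) ^ (q + 1) - (t - b) ^ (q + 1)) / (q + 1) := by
  rw [intervalIntegral.integral_comp_sub_left (fun u : ℝ => u ^ q) t,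
    integral_rpow (Or.inl hq)]

theorem rlCov_conditional_variance_bound (H : ℝ) (hH0 : 0 < H) (hH1 : H < 1/2) :
    ∃ C > 0, ∀ s t : ℝ, 0 < s → s ≤ t → t ≤ 1 →
      0 ≤ rlCov H s s - (rlCov H s t) ^ 2 / rlCov H t t ∧
      rlCov H s s - (rlCov H s t) ^ 2 / rlCov H t t ≤ C * (t - s) ^ (2 * H) := by
  refine ⟨1 / H, by positivity, fun s t hs hst ht1 => ?_⟩
  set p : ℝ := H - 1/2 with hp_def
  set q : ℝ := 2 * H - 1 with hq_def
  have hq : -1 < q := by simp only [hq_def]; linarith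
  have hq1 : q + 1 = 2 * H := by ring
  have hp0 : p ≤ 0 := by simp only [hp_def]; linarith
  have h2H : (0 : ℝ) < 2 * H := by linarith
  have ht0 : 0 < t := lt_of_lt_of_le hs hst
  -- pointwise doubling of exponent
  have hEq : ∀ u : ℝ, 0 ≤ u → u ^ p * u ^ p = u ^ q := by
    intro u hu
    rw [← Real.rpow_add' hu (by simp only [hp_def]; intro h; nlinarith)]
    norm_num [hp_def, hq_def]
    ring_nf
  -- rewrite the diagonal covariances
  have hdiag : ∀ u : ℝ, 0 ≤ u → rlCov H u u = ∫ r in (0:ℝ)..u, (u - r) ^ q := by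
    intro u hu
    rw [rlCov, min_self]
    refine intervalIntegral.integral_congr fun r hr => ?_
    rw [Set.uIcc_of_le hu] at hr
    exact hEq (u - r) (by linarith [hr.2])
  have hA : rlCov H s s = s ^ (2 * H) / (2 * H) := by
    rw [hdiag s hs.le, integral_tsub_rpow hq, hq1, sub_zero, sub_self,
      Real.zero_rpow (by positivity), sub_zero]
  have hT : rlCov H t t = t ^ (2 * H) / (2 * H) := by
    rw [hdiag t ht0.le, integral_tsub_rpow hq, hq1, sub_zero, sub_self,
      Real.zero_rpow (by positivity), sub_zero]
  -- the off-diagonal covariance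
  have hmin : min s t = s := min_eq_left hst
  have hBdef : rlCov H s t = ∫ r in (0:ℝ)..s, (t - r) ^ p * (s - r) ^ p := by
    rw [rlCov, hmin]
  -- integrability facts
  have hInt_t : IntervalIntegrable (fun r : ℝ => (t - r) ^ q) volume 0 s :=
    tsub_rpow_intervalIntegrable hq t 0 s
  have hInt_s : IntervalIntegrable (fun r : ℝ => (s - r) ^ q) volume 0 s :=
    tsub_rpow_intervalIntegrable hq s 0 s
  -- a.e. facts on (0, s]
  have h_ae_ne : ∀ᵐ r ∂(volume.restrict (Set.Icc (0:ℝ) s)), r ≠ s := by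
    refine ae_restrict_of_ae ?_
    simpa using (ae_iff.2 (by simp [Set.setOf_eq_eq_singleton'] :
      volume {r : ℝ | ¬ r ≠ s} = 0))
  -- pointwise comparison of kernels: (t-r)^p ≤ (s-r)^p for 0 ≤ r < s
  have hker : ∀ r : ℝ, 0 ≤ r → r < s → (t - r) ^ p ≤ (s - r) ^ p := by
    intro r _ hrs
    exact Real.rpow_le_rpow_of_nonpos (by linarith) (by linarith) hp0
  have hIoc_sub : Set.uIoc (0:ℝ) s ⊆ Set.Icc 0 s := by
    rw [Set.uIoc_of_le hs.le]; exact Set.Ioc_subset_Icc_self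
  -- integrability of the product
  have hmeas : AEStronglyMeasurable (fun r : ℝ => (t - r) ^ p * (s - r) ^ p)
      (volume.restrict (Set.uIoc (0:ℝ) s)) := by
    refine Measurable.aestronglyMeasurable ?_
    exact ((measurable_const.sub measurable_id).pow measurable_const).mul
      ((measurable_const.sub measurable_id).pow measurable_const)
  have hInt_B : IntervalIntegrable (fun r : ℝ => (t - r) ^ p * (s - r) ^ p) volume 0 s := by
    refine hInt_s.mono_fun' hmeas ?_
    have h1 : ∀ᵐ r ∂(volume.restrict (Set.uIoc (0:ℝ) s)), r ∈ Set.uIoc (0:ℝ) s :=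
      ae_restrict_mem measurableSet_uIoc
    filter_upwards [h1] with r hr
    have hr' := hIoc_sub hr
    have hsr : 0 ≤ s - r := by linarith [hr'.2]
    have htr : 0 ≤ t - r := by linarith [hr'.2]
    have h2 : (t - r) ^ p * (s - r) ^ p ≤ (s - r) ^ q := by
      rcases eq_or_lt_of_le hr'.2 with h | h
      · simp [h, Real.zero_rpow (show q ≠ 0 by simp only [hq_def]; intro hqq; nlinarith),
          Real.zero_rpow (show p ≠ 0 by simp only [hp_def]; intro hqq; nlinarith)]
      · calc (t - r) ^ p * (s - r) ^ p ≤ (s - r) ^ p * (s - r) ^ p :=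
              mul_le_mul_of_nonneg_right (hker r hr'.1 h) (Real.rpow_nonneg hsr p)
          _ = (s - r) ^ q := hEq _ hsr
    rw [Real.norm_eq_abs, abs_of_nonneg (mul_nonneg (Real.rpow_nonneg htr p)
      (Real.rpow_nonneg hsr p))]
    exact h2
  -- lower comparison: ∫ (t-r)^q ≤ B
  have hB_lower : ∫ r in (0:ℝ)..s, (t - r) ^ q ≤ rlCov H s t := by
    rw [hBdef]
    refine intervalIntegral.integral_mono_ae_restrict hs.le hInt_t hInt_B ?_
    filter_upwards [ae_restrict_mem measurableSet_Icc, h_ae_ne] with r hr hne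
    have hrs : r < s := lt_of_le_of_ne hr.2 hne
    have htr : 0 ≤ t - r := by linarith
    calc (t - r) ^ q = (t - r) ^ p * (t - r) ^ p := (hEq _ htr).symm
      _ ≤ (t - r) ^ p * (s - r) ^ p :=
          mul_le_mul_of_nonneg_left (hker r hr.1 hrs) (Real.rpow_nonneg htr p)
  -- upper comparison: B ≤ ∫ (s-r)^q = A
  have hB_upper : rlCov H s t ≤ rlCov H s s := by
    rw [hBdef, hdiag s hs.le]
    refine intervalIntegral.integral_mono_ae_restrict hs.le hInt_B hInt_s ?_
    filter_upwards [ae_restrict_mem measurableSet_Icc, h_ae_ne] with r hr hne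
    have hrs : r < s := lt_of_le_of_ne hr.2 hne
    have hsr : 0 ≤ s - r := by linarith
    calc (t - r) ^ p * (s - r) ^ p ≤ (s - r) ^ p * (s - r) ^ p :=
          mul_le_mul_of_nonneg_right (hker r hr.1 hrs) (Real.rpow_nonneg hsr p)
      _ = (s - r) ^ q := hEq _ hsr
  have hE1 : ∫ r in (0:ℝ)..s, (t - r) ^ q
      = (t ^ (2 * H) - (t - s) ^ (2 * H)) / (2 * H) := by
    rw [integral_tsub_rpow hq, hq1, sub_zero]
  -- abbreviations
  set A := rlCov H s s
  set B := rlCov H s t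
  set T := rlCov H t t
  have hd0 : (0:ℝ) ≤ (t - s) ^ (2 * H) := Real.rpow_nonneg (by linarith) _
  have hts : (t - s) ^ (2 * H) ≤ t ^ (2 * H) :=
    Real.rpow_le_rpow (by linarith) (by linarith) h2H.le
  have hst2H : s ^ (2 * H) ≤ t ^ (2 * H) :=
    Real.rpow_le_rpow hs.le hst h2H.le
  have hT0 : 0 < T := by rw [hT]; positivity
  have hA0 : 0 ≤ A := by rw [hA]; positivity
  have hB0 : 0 ≤ B := by
    refine le_trans ?_ hB_lower
    rw [hE1]
    exact div_nonneg (by linarith) h2H.le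
  have hAT : A ≤ T := by rw [hA, hT]; gcongr
  have hB_lower' : (t ^ (2 * H) - (t - s) ^ (2 * H)) / (2 * H) ≤ B := by
    rw [← hE1]; exact hB_lower
  constructor
  · -- 0 ≤ A - B^2/T
    have hBsq : B ^ 2 ≤ A * T := by nlinarith
    have : B ^ 2 / T ≤ A := (div_le_iff₀ hT0).2 (by linarith [hBsq])
    linarith
  · -- A - B^2/T ≤ (1/H) (t-s)^{2H}
    have step1 : A - B ^ 2 / T ≤ A - (2 * B - T) := by
      have h1 : 2 * B - T ≤ B ^ 2 / T := by
        rw [le_div_iff₀ hT0]; nlinarith [sq_nonneg (B - T)]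
      linarith
    refine step1.trans ?_
    rw [hA, hT, ← sub_nonneg]
    have hBH : (t ^ (2 * H) - (t - s) ^ (2 * H)) / 2 ≤ B * H := by
      have h := mul_le_mul_of_nonneg_right hB_lower' hH0.le
      have hEqq : (t ^ (2 * H) - (t - s) ^ (2 * H)) / (2 * H) * H
          = (t ^ (2 * H) - (t - s) ^ (2 * H)) / 2 := by
        field_simp
      linarith [h, hEqq]
    have key : 1 / H * (t - s) ^ (2 * H)
          - (s ^ (2 * H) / (2 * H) - (2 * B - t ^ (2 * H) / (2 * H)))
        = ((t - s) ^ (2 * H) - s ^ (2 * H) / 2 + 2 * (B * H) - t ^ (2 * H) / 2) / H := by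
      field_simp
      ring
    rw [key]
    exact div_nonneg (by linarith [hBH, hst2H]) hH0.le
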